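/- Let c, m > 0 and θ ∈ ℝ, and define γ : ℝ → ℝ³ by γ(s) = m·e^{(cos θ/√(1+c²))·s}·(c·cos((sin θ/c)·s), c·sin((sin θ/c)·s), 1). Then for every s there exists λ(s) ∈ ℝ such that the hyperbolic covariant acceleration A(s) = γ''(s) − (2·γ₃'(s)/γ₃(s))·γ'(s) + (‖γ'(s)‖ₑ²/γ₃(s))·e₃ satisfies A(s) = λ(s)·(γ₁(s), γ₂(s), −c²·γ₃(s)); that is, A(s) is proportional to the Euclidean gradient of f(x,y,z) = x² + y² − c²z² at γ(s), so γ is a geodesic of the Killing cylinder x² + y² = c²z² in ℍ³. -/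

import Mathlib

open Real
open scoped RealInnerProductSpace

/-- A point/vector of Euclidean 3-space. -/
noncomputable def v3 (x y z : ℝ) : EuclideanSpace ℝ (Fin 3) := WithLp.toLp 2 ![x, y, z]

/-- Hyperbolic (upper half-space) inner product of u and v at the point p. -/
noncomputable def hInner (p u v : EuclideanSpace ℝ (Fin 3)) : ℝ := ⟪u, v⟫ / (p 2) ^ 2

/-- Hyperbolic (upper half-space) norm of v at the point p. -/
noncomputable def hNorm (p v : EuclideanSpace ℝ (Fin 3)) : ℝ := ‖v‖ / p 2

/-- Covariant acceleration ∇_{γ'}γ' of a hyperbolic unit-speed curve in the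
upper half-space model: A(s) = γ''(s) − (2γ₃'(s)/γ₃(s))·γ'(s) + (‖γ'(s)‖ₑ²/γ₃(s))·e₃. -/
noncomputable def hAccel (γ : ℝ → EuclideanSpace ℝ (Fin 3)) (s : ℝ) :
    EuclideanSpace ℝ (Fin 3) :=
  deriv (deriv γ) s - (2 * deriv (fun t => γ t 2) s / γ s 2) • deriv γ s
    + (‖deriv γ s‖ ^ 2 / γ s 2) • v3 0 0 1

/-! The curve is `m e^{as} (c cos bs, c sin bs, 1)`, a member of the family
`e^{at} (cos bt • P + sin bt • Q + R)`, which is closed under differentiation. So `γ'` and `γ''` are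
again of this form, and a direct computation gives `A = -(a² + b²) (γ₁, γ₂, -c² γ₃)` for all
`a` and `b`. -/

section ExpSpiral

variable {E : Type*} [NormedAddCommGroup E] [NormedSpace ℝ E]

noncomputable def expSpiral (a b : ℝ) (P Q R : E) (t : ℝ) : E :=
  exp (a * t) • (cos (b * t) • P + sin (b * t) • Q + R)

theorem hasDerivAt_expSpiral (a b : ℝ) (P Q R : E) (t : ℝ) :
    HasDerivAt (expSpiral a b P Q R)
      (expSpiral a b (a • P + b • Q) (a • Q - b • P) (a • R) t) t := by
  have hexp := ((hasDerivAt_id t).const_mul a).exp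
  have hcos := ((hasDerivAt_id t).const_mul b).cos
  have hsin := ((hasDerivAt_id t).const_mul b).sin
  refine (hexp.smul (((hcos.smul_const P).add (hsin.smul_const Q)).add_const R)).congr_deriv ?_
  simp only [expSpiral, id_eq, mul_one, Pi.add_apply]
  module

theorem deriv_expSpiral (a b : ℝ) (P Q R : E) :
    deriv (expSpiral a b P Q R) = expSpiral a b (a • P + b • Q) (a • Q - b • P) (a • R) :=
  funext fun t => (hasDerivAt_expSpiral a b P Q R t).deriv

end ExpSpiral

theorem deriv_euclideanSpace_apply {ι : Type*} [Fintype ι] {f : ℝ → EuclideanSpace ℝ ι} {t : ℝ}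
    (hf : DifferentiableAt ℝ f t) (i : ι) :
    deriv (fun s => f s i) t = deriv f t i :=
  ((EuclideanSpace.proj (𝕜 := ℝ) i).hasFDerivAt.comp_hasDerivAt t hf.hasDerivAt).deriv

noncomputable def logHelix (m c a b : ℝ) : ℝ → EuclideanSpace ℝ (Fin 3) :=
  expSpiral a b (v3 (m * c) 0 0) (v3 0 (m * c) 0) (v3 0 0 m)

theorem logHelix_eq (m c a b : ℝ) :
    logHelix m c a b = fun s => (m * exp (a * s)) • v3 (c * cos (b * s)) (c * sin (b * s)) 1 := by
  funext s
  ext i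
  fin_cases i <;> simp only [logHelix, expSpiral, v3, Fin.isValue, Fin.zero_eta,
    Fin.mk_one, Fin.reduceFinMk, PiLp.add_apply, PiLp.smul_apply, Matrix.cons_val, Matrix.cons_val_zero,
    Matrix.cons_val_one, smul_eq_mul, smul_add, mul_zero, add_zero, zero_add, mul_one] <;> ring

theorem hAccel_logHelix (m c a b s : ℝ) (hm : m ≠ 0) :
    hAccel (logHelix m c a b) s = (-(a ^ 2 + b ^ 2)) •
      v3 (logHelix m c a b s 0) (logHelix m c a b s 1) (-(c ^ 2) * logHelix m c a b s 2) := by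
  have hdiff : DifferentiableAt ℝ (logHelix m c a b) s :=
    (hasDerivAt_expSpiral _ _ _ _ _ s).differentiableAt
  rw [hAccel, deriv_euclideanSpace_apply hdiff]
  simp only [logHelix, deriv_expSpiral]
  have hexp : exp (a * s) ≠ 0 := (exp_pos _).ne'
  have hpyth := sin_sq_add_cos_sq (s * b)
  ext i
  fin_cases i <;> simp only [expSpiral, v3, Fin.isValue, Fin.zero_eta, Fin.mk_one,
    Fin.reduceFinMk, PiLp.add_apply, PiLp.sub_apply, PiLp.smul_apply, smul_eq_mul, Matrix.cons_val,
    Matrix.cons_val_zero, Matrix.cons_val_one, EuclideanSpace.real_norm_sq_eq, Fin.sum_univ_three,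
    smul_add, mul_zero, add_zero, zero_add, sub_zero, zero_sub, sub_self, mul_one]
    <;> field_simp
  · ring
  · ring
  · linear_combination c ^ 2 * (a ^ 2 + b ^ 2) * hpyth

theorem stmt_11_general (c m θ : ℝ) (hm : 0 < m)
    (γ : ℝ → EuclideanSpace ℝ (Fin 3))
    (hγ : γ = fun s => (m * Real.exp ((Real.cos θ / Real.sqrt (1 + c ^ 2)) * s)) •
        v3 (c * Real.cos ((Real.sin θ / c) * s)) (c * Real.sin ((Real.sin θ / c) * s)) 1) :
    ∀ s : ℝ, ∃ lam : ℝ,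
      hAccel γ s = lam • v3 (γ s 0) (γ s 1) (-(c ^ 2) * γ s 2) := by
  rw [hγ, ← logHelix_eq]
  exact fun s => ⟨_, hAccel_logHelix m c _ _ s hm.ne'⟩

/-- For the helix γ(s) = m·e^{(cos θ/√(1+c²))s}·(c cos((sin θ/c)s),
c sin((sin θ/c)s), 1), the hyperbolic covariant acceleration A(s) is proportional to
the Euclidean gradient (γ₁, γ₂, −c²γ₃) of f(x,y,z) = x² + y² − c²z² at γ(s); hence γ is a
geodesic of the Killing cylinder x² + y² = c²z² in ℍ³. -/
theorem stmt_11 (c m θ : ℝ) (hc : 0 < c) (hm : 0 < m)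
    (γ : ℝ → EuclideanSpace ℝ (Fin 3))
    (hγ : γ = fun s => (m * Real.exp ((Real.cos θ / Real.sqrt (1 + c ^ 2)) * s)) •
        v3 (c * Real.cos ((Real.sin θ / c) * s)) (c * Real.sin ((Real.sin θ / c) * s)) 1) :
    ∀ s : ℝ, ∃ lam : ℝ,
      hAccel γ s = lam • v3 (γ s 0) (γ s 1) (-(c ^ 2) * γ s 2) :=
  stmt_11_general c m θ hm γ hγ
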